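/- Let ν ≥ 2, let μ satisfy 1 ≤ μ ≤ ν−1, and let Ψ be a nonempty finite set of coverings. Define the doped RVB polynomial F^h_Ψ = Σ_{ψ∈Ψ} Σ_{R ⊆ A, #R = μ} ∏_{a∈R}(X_{ψ(a)} − X_a) in ℂ[X_1,…,X_{2ν}]. Then F^h_Ψ ≠ 0 and F^h_Ψ splits across no nontrivial bipartition of Γ_{2ν}; i.e., the doped RVB state (the RVB state with γ = ν − μ holes) is genuinely multipartite entangled. -/

import Mathlib

open MvPolynomial Finset

noncomputable section

/-- The odd-labelled site `2t−1` of the paper (`t`-th site of sublattice `A`),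
zero-indexed as `2t` in `Fin (2ν)`. -/
def siteA (ν : ℕ) (t : Fin ν) : Fin (2 * ν) := ⟨2 * t.val, by have := t.isLt; omega⟩

/-- The even-labelled site `2t` of the paper (`t`-th site of sublattice `B`),
zero-indexed as `2t+1` in `Fin (2ν)`. -/
def siteB (ν : ℕ) (t : Fin ν) : Fin (2 * ν) := ⟨2 * t.val + 1, by have := t.isLt; omega⟩

/-- A covering is a bijection `ψ : A → B`; it is encoded by the permutation
`σ` of `Fin ν` with `ψ(siteA t) = siteB (σ t)`.  Its covering polynomial is
`F_ψ = ∏_{a∈A} (X_{ψ(a)} − X_a)`. -/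
def covPoly (ν : ℕ) (σ : Equiv.Perm (Fin ν)) : MvPolynomial (Fin (2 * ν)) ℂ :=
  ∏ t : Fin ν, (X (siteB ν (σ t)) - X (siteA ν t))

/-- `F` splits across the bipartition `(E, Eᶜ)`. -/
def SplitsAcross {n : ℕ} (F : MvPolynomial (Fin n) ℂ) (E : Finset (Fin n)) : Prop :=
  ∃ p q : MvPolynomial (Fin n) ℂ, F = p * q ∧ p.vars ⊆ E ∧ q.vars ⊆ Eᶜ

/-- `ψ(E ∩ A) = E ∩ B` for the covering `ψ` encoded by `σ`
(here `E ∩ B` is the set of odd-indexed, i.e. `B`-sublattice, elements of `E`). -/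
def MapsCut (ν : ℕ) (σ : Equiv.Perm (Fin ν)) (E : Finset (Fin (2 * ν))) : Prop :=
  ((Finset.univ.filter (fun t => siteA ν t ∈ E)).image fun t => siteB ν (σ t))
    = E.filter (fun x => x.val % 2 = 1)

/-- The (unnormalized) doped RVB polynomial with `μ` resonants (i.e. `γ = ν − μ`
holes): `F^h_Ψ = Σ_{ψ∈Ψ} Σ_{R ⊆ A, #R = μ} ∏_{a∈R} (X_{ψ(a)} − X_a)`. -/
def dopedPoly (ν μ : ℕ) (Ψ : Finset (Equiv.Perm (Fin ν))) :
    MvPolynomial (Fin (2 * ν)) ℂ :=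
  ∑ σ ∈ Ψ, ∑ R ∈ Finset.powersetCard μ (Finset.univ : Finset (Fin ν)),
    ∏ t ∈ R, (X (siteB ν (σ t)) - X (siteA ν t))

/-!
The doped RVB polynomial `F` is homogeneous of degree `μ`. If `F = p * q` with the variables of
`p` in `E` and those of `q` in `Eᶜ`, then every monomial of `F` is uniquely a product of a
monomial of `p` and one of `q`, so the product of the `E`-part of one monomial of `F` with the
`Eᶜ`-part of another is again a monomial of `F`; by homogeneity all monomials of `F` then have the
same degree in the variables of `E`.

Monomials of `F` with different `E`-degrees are found among two kinds of squarefree monomials: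
`∏_{t ∈ T} X_{a_t}` with `#T = μ`, whose coefficient is `#Ψ (-1)^μ`, and
`X_{b_j} ∏_{t ∈ S} X_{a_t}` with `#S = μ - 1`, whose coefficient is `(-1)^(μ-1)` times the number
of coverings in `Ψ` that do not pair `b_j` with a site of `S`. If `E` separates two sites of `A`,
two monomials of the first kind do; if `E ⊇ A` misses some `b_j`, one monomial of each kind does;
in the remaining case `A ∩ E = ∅`, and `Eᶜ` is of the second type.
-/

namespace Finsupp

variable {α M : Type*} [AddCommMonoid M] [DecidableEq α] {E : Finset α}

theorem filter_mem_add_of_support {a b : α →₀ M} (ha : a.support ⊆ E)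
    (hb : Disjoint b.support E) : (a + b).filter (· ∈ E) = a := by
  rw [filter_add, (filter_eq_self_iff _ _).2 fun x hx => ha (mem_support_iff.2 hx),
    (filter_eq_zero_iff _ _).2 fun x hx => notMem_support_iff.1 (Finset.disjoint_right.1 hb hx),
    add_zero]

end Finsupp

namespace MvPolynomial

variable {σ R : Type*} [CommSemiring R] [DecidableEq σ] {E : Finset σ} {p q : MvPolynomial σ R}

theorem coeff_add_mul_of_vars {a b : σ →₀ ℕ} (hp : p.vars ⊆ E) (hq : Disjoint q.vars E)
    (ha : a.support ⊆ E) (hb : Disjoint b.support E) :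
    coeff (a + b) (p * q) = coeff a p * coeff b q := by
  rw [coeff_mul, Finset.sum_eq_single_of_mem (a, b) (by simp)]
  rintro ⟨c, d⟩ hcd hne
  by_contra h
  have hc := support_subset_vars_of_mem_support (mem_support_iff.2 (left_ne_zero_of_mul h))
  have hd := support_subset_vars_of_mem_support (mem_support_iff.2 (right_ne_zero_of_mul h))
  have hsum : c + d = a + b := Finset.HasAntidiagonal.mem_antidiagonal.1 hcd
  have hca : c = a := by
    rw [← Finsupp.filter_mem_add_of_support ha hb, ← hsum,
      Finsupp.filter_mem_add_of_support (hc.trans hp) (hq.mono_left hd)]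
  subst hca
  exact hne (by rw [add_left_cancel hsum])

theorem IsHomogeneous.degree_filter_mem_eq_of_eq_mul [NoZeroDivisors R] {F : MvPolynomial σ R}
    {n : ℕ} (hF : F.IsHomogeneous n) (hpq : F = p * q) (hp : p.vars ⊆ E)
    (hq : Disjoint q.vars E) {γ₁ γ₂ : σ →₀ ℕ} (h₁ : coeff γ₁ F ≠ 0) (h₂ : coeff γ₂ F ≠ 0) :
    (γ₁.filter (· ∈ E)).degree = (γ₂.filter (· ∈ E)).degree := by
  have hin (γ : σ →₀ ℕ) : (γ.filter (· ∈ E)).support ⊆ E := fun x hx => (Finset.mem_filter.1 hx).2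
  have hout (γ : σ →₀ ℕ) : Disjoint (γ.filter (· ∉ E)).support E :=
    Finset.disjoint_left.2 fun x hx => (Finset.mem_filter.1 hx).2
  have hcoeff (γ γ' : σ →₀ ℕ) : coeff (γ.filter (· ∈ E) + γ'.filter (· ∉ E)) F
      = coeff (γ.filter (· ∈ E)) p * coeff (γ'.filter (· ∉ E)) q := by
    rw [hpq, coeff_add_mul_of_vars hp hq (hin γ) (hout γ')]
  have hdeg {γ γ' : σ →₀ ℕ} (h : coeff (γ.filter (· ∈ E) + γ'.filter (· ∉ E)) F ≠ 0) :
      (γ.filter (· ∈ E)).degree + (γ'.filter (· ∉ E)).degree = n := by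
    rw [← map_add]
    by_contra hne
    exact h (hF.coeff_eq_zero hne)
  rw [← Finsupp.filter_add_filter_not γ₁ (· ∈ E), hcoeff] at h₁
  rw [← Finsupp.filter_add_filter_not γ₂ (· ∈ E), hcoeff] at h₂
  have h₁₂ := hdeg (γ := γ₁) (γ' := γ₂)
    (by rw [hcoeff]; exact mul_ne_zero (left_ne_zero_of_mul h₁) (right_ne_zero_of_mul h₂))
  have h₁₁ := hdeg (by rwa [hcoeff])
  have h₂₂ := hdeg (γ := γ₂) (γ' := γ₂) (by rwa [hcoeff])
  omega

end MvPolynomial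

theorem SplitsAcross.compl {n : ℕ} {F : MvPolynomial (Fin n) ℂ} {E : Finset (Fin n)}
    (h : SplitsAcross F E) : SplitsAcross F Eᶜ := by
  obtain ⟨p, q, hpq, hp, hq⟩ := h
  exact ⟨q, p, by rw [hpq, mul_comm], hq, by rwa [compl_compl]⟩

theorem SplitsAcross.degree_filter_mem_eq {n d : ℕ} {F : MvPolynomial (Fin n) ℂ}
    {E : Finset (Fin n)} (h : SplitsAcross F E) (hF : F.IsHomogeneous d) {γ₁ γ₂ : Fin n →₀ ℕ}
    (h₁ : coeff γ₁ F ≠ 0) (h₂ : coeff γ₂ F ≠ 0) :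
    (γ₁.filter (· ∈ E)).degree = (γ₂.filter (· ∈ E)).degree := by
  obtain ⟨p, q, hpq, hp, hq⟩ := h
  exact hF.degree_filter_mem_eq_of_eq_mul hpq hp (subset_compl_iff_disjoint_right.1 hq) h₁ h₂

theorem Finset.sum_ite_const_ne_zero {α M : Type*} [AddCommMonoid M] [IsAddTorsionFree M]
    {s : Finset α} {p : α → Prop} [DecidablePred p] {c : M} (hc : c ≠ 0)
    (h : ∃ a ∈ s, p a) : ∑ a ∈ s, (if p a then c else 0) ≠ 0 := by
  obtain ⟨a, ha, hpa⟩ := h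
  rw [Finset.sum_ite, Finset.sum_const_zero, add_zero, Finset.sum_const, ne_eq,
    nsmul_eq_zero_iff_left hc]
  exact Finset.card_ne_zero.2 ⟨a, Finset.mem_filter.2 ⟨ha, hpa⟩⟩

section SqfreeExp

variable {ι κ : Type*}

def sqfreeExp (f : ι → κ) (S : Finset ι) : κ →₀ ℕ :=
  ∑ t ∈ S, Finsupp.single (f t) 1

variable {f g : ι → κ}

@[simp]
theorem sqfreeExp_empty (f : ι → κ) : sqfreeExp f ∅ = 0 := Finset.sum_empty

theorem degree_sqfreeExp (f : ι → κ) (S : Finset ι) : (sqfreeExp f S).degree = S.card := by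
  simp [sqfreeExp, Finsupp.degree_single]

theorem filter_sqfreeExp (f : ι → κ) (S : Finset ι) (p : κ → Prop) [DecidablePred p] :
    (sqfreeExp f S).filter p = sqfreeExp f (S.filter (p ∘ f)) := by
  rw [sqfreeExp, Finsupp.filter_sum, sqfreeExp, Finset.sum_filter]
  refine Finset.sum_congr rfl fun t _ => ?_
  by_cases h : p (f t) <;> simp [h]

theorem sqfreeExp_apply_of_forall_ne {x : κ} (hx : ∀ t, f t ≠ x) (S : Finset ι) :
    sqfreeExp f S x = 0 := by
  simp [sqfreeExp, Finsupp.finsetSum_apply, hx]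

variable {A : Type*} [CommRing A]

theorem prod_X_eq_monomial_sqfreeExp (f : ι → κ) (S : Finset ι) :
    ∏ t ∈ S, (X (f t) : MvPolynomial κ A) = monomial (sqfreeExp f S) 1 := by
  rw [sqfreeExp, monomial_sum_one]
  rfl

variable [DecidableEq ι]

theorem sqfreeExp_apply_self (hf : f.Injective) (S : Finset ι) (s : ι) :
    sqfreeExp f S (f s) = if s ∈ S then 1 else 0 := by
  simp [sqfreeExp, Finsupp.finsetSum_apply, Finsupp.single_apply_left hf, Finsupp.single_apply]

theorem sqfreeExp_add_sqfreeExp_inj (hf : f.Injective) (hg : g.Injective)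
    (hfg : ∀ s t, f s ≠ g t) {K L K' L' : Finset ι} :
    sqfreeExp g K + sqfreeExp f L = sqfreeExp g K' + sqfreeExp f L' ↔ K = K' ∧ L = L' := by
  refine ⟨fun h => ⟨Finset.ext fun t => ?_, Finset.ext fun t => ?_⟩, fun ⟨hK, hL⟩ => hK ▸ hL ▸ rfl⟩
  · have := DFunLike.congr_fun h (g t)
    simp only [Finsupp.coe_add, Pi.add_apply, sqfreeExp_apply_self hg,
      sqfreeExp_apply_of_forall_ne (hfg · t)] at this
    by_cases hK : t ∈ K <;> by_cases hK' : t ∈ K' <;> simp_all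
  · have := DFunLike.congr_fun h (f t)
    simp only [Finsupp.coe_add, Pi.add_apply, sqfreeExp_apply_self hf,
      sqfreeExp_apply_of_forall_ne (fun s => (hfg t s).symm)] at this
    by_cases hL : t ∈ L <;> by_cases hL' : t ∈ L' <;> simp_all

theorem prod_X_sub_X_eq_sum (f g : ι → κ) (R : Finset ι) :
    ∏ t ∈ R, (X (g t) - X (f t) : MvPolynomial κ A)
      = ∑ L ∈ R.powerset, monomial (sqfreeExp g (R \ L) + sqfreeExp f L) ((-1) ^ L.card) := by
  rw [Finset.prod_sub]
  refine Finset.sum_congr rfl fun L _ => ?_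
  rw [prod_X_eq_monomial_sqfreeExp, prod_X_eq_monomial_sqfreeExp, mul_assoc, monomial_mul,
    one_mul, show ((-1 : MvPolynomial κ A)) ^ L.card = C ((-1) ^ L.card) by simp, C_mul_monomial,
    mul_one]

theorem coeff_prod_X_sub_X (hf : f.Injective) (hg : g.Injective) (hfg : ∀ s t, f s ≠ g t)
    (R K L : Finset ι) :
    coeff (sqfreeExp g K + sqfreeExp f L) (∏ t ∈ R, (X (g t) - X (f t)) : MvPolynomial κ A)
      = if L ⊆ R ∧ R \ L = K then (-1) ^ L.card else 0 := by
  classical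
  simp only [prod_X_sub_X_eq_sum, coeff_sum, coeff_monomial, sqfreeExp_add_sqfreeExp_inj hf hg hfg,
    and_comm (a := R \ _ = K), ite_and, Finset.sum_ite_eq', Finset.mem_powerset]

end SqfreeExp

section DopedRVB

variable {ν μ : ℕ} {Ψ : Finset (Equiv.Perm (Fin ν))}

theorem siteA_injective : (siteA ν).Injective := fun s t h => by
  have : 2 * s.val = 2 * t.val := congrArg Fin.val h
  exact Fin.ext (by omega)

theorem siteB_injective : (siteB ν).Injective := fun s t h => by
  have : 2 * s.val + 1 = 2 * t.val + 1 := congrArg Fin.val h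
  exact Fin.ext (by omega)

theorem siteA_ne_siteB (s t : Fin ν) : siteA ν s ≠ siteB ν t := fun h => by
  have : 2 * s.val = 2 * t.val + 1 := congrArg Fin.val h
  omega

theorem exists_siteA_eq_or_exists_siteB_eq (x : Fin (2 * ν)) :
    (∃ t, siteA ν t = x) ∨ ∃ t, siteB ν t = x := by
  have := x.isLt
  obtain ⟨k, h | h⟩ := Nat.even_or_odd' x.val
  · exact .inl ⟨⟨k, by omega⟩, Fin.ext h.symm⟩
  · exact .inr ⟨⟨k, by omega⟩, Fin.ext h.symm⟩

theorem isHomogeneous_dopedPoly : (dopedPoly ν μ Ψ).IsHomogeneous μ := by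
  refine IsHomogeneous.sum _ _ _ fun σ _ => IsHomogeneous.sum _ _ _ fun R hR => ?_
  have := IsHomogeneous.prod R _ (fun _ => 1)
    fun t _ => (isHomogeneous_X ℂ (siteB ν (σ t))).sub (isHomogeneous_X ℂ (siteA ν t))
  rwa [Finset.sum_const, smul_eq_mul, mul_one, (Finset.mem_powersetCard.1 hR).2] at this

theorem coeff_dopedPoly_ne_zero {K : Equiv.Perm (Fin ν) → Finset (Fin ν)} {L : Finset (Fin ν)}
    {γ : Fin (2 * ν) →₀ ℕ}
    (hγ : ∀ σ, γ = sqfreeExp (fun t => siteB ν (σ t)) (K σ) + sqfreeExp (siteA ν) L)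
    {σ₀ : Equiv.Perm (Fin ν)} (hσ₀ : σ₀ ∈ Ψ) (hdisj : Disjoint L (K σ₀))
    (hcard : L.card + (K σ₀).card = μ) :
    coeff γ (dopedPoly ν μ Ψ) ≠ 0 := by
  have hterm (σ : Equiv.Perm (Fin ν)) (R : Finset (Fin ν)) :
      coeff γ (∏ t ∈ R, (X (siteB ν (σ t)) - X (siteA ν t)))
        = if L ⊆ R ∧ R \ L = K σ then (-1 : ℂ) ^ L.card else 0 := by
    rw [hγ σ]
    exact coeff_prod_X_sub_X siteA_injective (siteB_injective.comp σ.injective)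
      (fun s t => siteA_ne_siteB s (σ t)) R (K σ) L
  simp only [dopedPoly, coeff_sum, hterm]
  rw [← Finset.sum_product']
  refine Finset.sum_ite_const_ne_zero (pow_ne_zero _ (neg_ne_zero.2 one_ne_zero))
    ⟨(σ₀, L ∪ K σ₀), Finset.mem_product.2 ⟨hσ₀, ?_⟩, Finset.subset_union_left, ?_⟩
  · rw [Finset.mem_powersetCard, Finset.card_union_of_disjoint hdisj, hcard]
    exact ⟨Finset.subset_univ _, rfl⟩
  · rw [Finset.union_sdiff_left, Finset.sdiff_eq_self_of_disjoint hdisj.symm]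

theorem coeff_sqfreeExp_siteA_dopedPoly_ne_zero (hΨ : Ψ.Nonempty) {T : Finset (Fin ν)}
    (hT : T.card = μ) : coeff (sqfreeExp (siteA ν) T) (dopedPoly ν μ Ψ) ≠ 0 :=
  coeff_dopedPoly_ne_zero (K := fun _ => ∅) (by simp) hΨ.choose_spec
    (Finset.disjoint_empty_right T) (by simpa using hT)

theorem coeff_single_siteB_add_sqfreeExp_siteA_dopedPoly_ne_zero {σ₀ : Equiv.Perm (Fin ν)}
    (hσ₀ : σ₀ ∈ Ψ) {j : Fin ν} {S : Finset (Fin ν)} (hjS : σ₀⁻¹ j ∉ S) (hS : S.card + 1 = μ) :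
    coeff (Finsupp.single (siteB ν j) 1 + sqfreeExp (siteA ν) S) (dopedPoly ν μ Ψ) ≠ 0 :=
  coeff_dopedPoly_ne_zero (K := fun σ => {σ⁻¹ j}) (by simp [sqfreeExp]) hσ₀
    (Finset.disjoint_singleton_right.2 hjS) (by simpa using hS)

theorem not_splitsAcross_dopedPoly_of_siteA_mem_of_siteA_notMem (hμ : 1 ≤ μ) (hμ' : μ ≤ ν - 1)
    (hΨ : Ψ.Nonempty) {E : Finset (Fin (2 * ν))} {t₁ t₂ : Fin ν} (h₁ : siteA ν t₁ ∈ E)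
    (h₂ : siteA ν t₂ ∉ E) : ¬ SplitsAcross (dopedPoly ν μ Ψ) E := by
  intro hsplit
  have ht : t₁ ≠ t₂ := fun h => h₂ (h ▸ h₁)
  obtain ⟨S, hSsub, hS⟩ := Finset.exists_subset_card_eq (s := Finset.univ \ {t₁, t₂}) (n := μ - 1)
    (by rw [Finset.card_sdiff_of_subset (Finset.subset_univ _), Finset.card_univ,
      Fintype.card_fin, Finset.card_pair ht]; omega)
  have ht₁ : t₁ ∉ S := fun h => by simpa using hSsub h
  have ht₂ : t₂ ∉ S := fun h => by simpa using hSsub h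
  have := hsplit.degree_filter_mem_eq isHomogeneous_dopedPoly
    (coeff_sqfreeExp_siteA_dopedPoly_ne_zero hΨ (T := insert t₁ S)
      (by rw [Finset.card_insert_of_notMem ht₁]; omega))
    (coeff_sqfreeExp_siteA_dopedPoly_ne_zero hΨ (T := insert t₂ S)
      (by rw [Finset.card_insert_of_notMem ht₂]; omega))
  simp [filter_sqfreeExp, degree_sqfreeExp, Finset.filter_insert, h₁, h₂, ht₁] at this

theorem not_splitsAcross_dopedPoly_of_forall_siteA_mem_of_siteB_notMem (hμ : 1 ≤ μ)
    (hμ' : μ ≤ ν - 1) (hΨ : Ψ.Nonempty) {E : Finset (Fin (2 * ν))} (hA : ∀ t, siteA ν t ∈ E)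
    {j : Fin ν} (hj : siteB ν j ∉ E) : ¬ SplitsAcross (dopedPoly ν μ Ψ) E := by
  intro hsplit
  obtain ⟨σ₀, hσ₀⟩ := hΨ
  obtain ⟨T, -, hT⟩ := Finset.exists_subset_card_eq (s := (Finset.univ : Finset (Fin ν))) (n := μ)
    (by rw [Finset.card_univ, Fintype.card_fin]; omega)
  obtain ⟨S, hSsub, hS⟩ := Finset.exists_subset_card_eq (s := Finset.univ.erase (σ₀⁻¹ j))
    (n := μ - 1) (by rw [Finset.card_erase_of_mem (Finset.mem_univ _), Finset.card_univ,
      Fintype.card_fin]; omega)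
  have := hsplit.degree_filter_mem_eq isHomogeneous_dopedPoly
    (coeff_sqfreeExp_siteA_dopedPoly_ne_zero ⟨σ₀, hσ₀⟩ hT)
    (coeff_single_siteB_add_sqfreeExp_siteA_dopedPoly_ne_zero hσ₀
      (fun h => Finset.notMem_erase _ _ (hSsub h)) (by omega))
  simp [filter_sqfreeExp, degree_sqfreeExp, hA, hj] at this
  omega

theorem dopedPoly_ne_zero (hμ : μ ≤ ν) (hΨ : Ψ.Nonempty) : dopedPoly ν μ Ψ ≠ 0 := by
  obtain ⟨T, -, hT⟩ := Finset.exists_subset_card_eq (s := (Finset.univ : Finset (Fin ν))) (n := μ)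
    (by rwa [Finset.card_univ, Fintype.card_fin])
  exact fun h => coeff_sqfreeExp_siteA_dopedPoly_ne_zero hΨ hT (by rw [h, coeff_zero])

theorem not_splitsAcross_dopedPoly (hμ : 1 ≤ μ) (hμ' : μ ≤ ν - 1) (hΨ : Ψ.Nonempty)
    {E : Finset (Fin (2 * ν))} (hE : E.Nonempty) (hE' : E ≠ Finset.univ) :
    ¬ SplitsAcross (dopedPoly ν μ Ψ) E := by
  by_cases hA : ∀ t, siteA ν t ∈ E
  · obtain ⟨x, hx⟩ : ∃ x, x ∉ E := by simpa [Finset.eq_univ_iff_forall] using hE'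
    obtain ⟨t, rfl⟩ | ⟨j, rfl⟩ := exists_siteA_eq_or_exists_siteB_eq x
    · exact absurd (hA t) hx
    · exact not_splitsAcross_dopedPoly_of_forall_siteA_mem_of_siteB_notMem hμ hμ' hΨ hA hx
  obtain ⟨t₂, ht₂⟩ := not_forall.1 hA
  by_cases hA' : ∃ t₁, siteA ν t₁ ∈ E
  · obtain ⟨t₁, ht₁⟩ := hA'
    exact not_splitsAcross_dopedPoly_of_siteA_mem_of_siteA_notMem hμ hμ' hΨ ht₁ ht₂
  obtain ⟨x, hx⟩ := hE
  obtain ⟨t, rfl⟩ | ⟨j, rfl⟩ := exists_siteA_eq_or_exists_siteB_eq x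
  · exact absurd ⟨t, hx⟩ hA'
  · exact fun h => not_splitsAcross_dopedPoly_of_forall_siteA_mem_of_siteB_notMem hμ hμ' hΨ
      (E := Eᶜ) (fun t => Finset.mem_compl.2 fun ht => hA' ⟨t, ht⟩)
      (Finset.notMem_compl.2 hx) h.compl

end DopedRVB

theorem stmt_17_general (ν μ : ℕ) (hμ : 1 ≤ μ) (hμ' : μ ≤ ν - 1)
    (Ψ : Finset (Equiv.Perm (Fin ν))) (hΨ : Ψ.Nonempty) :
    dopedPoly ν μ Ψ ≠ 0 ∧
    ∀ E : Finset (Fin (2 * ν)), E.Nonempty → E ≠ Finset.univ →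
      ¬ SplitsAcross (dopedPoly ν μ Ψ) E :=
  ⟨dopedPoly_ne_zero (by omega) hΨ, fun _ hE hE' => not_splitsAcross_dopedPoly hμ hμ' hΨ hE hE'⟩

/-- Theorem 3.9 of Section 3.2: for `1 ≤ μ ≤ ν − 1` and `Ψ`
nonempty, the doped RVB polynomial is nonzero and splits across no nontrivial
bipartition: the doped RVB state is genuinely multipartite entangled. -/
theorem stmt_17 (ν μ : ℕ) (hν : 2 ≤ ν) (hμ : 1 ≤ μ) (hμ' : μ ≤ ν - 1)
    (Ψ : Finset (Equiv.Perm (Fin ν))) (hΨ : Ψ.Nonempty) :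
    dopedPoly ν μ Ψ ≠ 0 ∧
    ∀ E : Finset (Fin (2 * ν)), E.Nonempty → E ≠ Finset.univ →
      ¬ SplitsAcross (dopedPoly ν μ Ψ) E :=
  stmt_17_general ν μ hμ hμ' Ψ hΨ
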